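/- For every finite lattice L there exists a finite matroid M such that L is order-isomorphic to the set of cyclic flats of M ordered by inclusion, and moreover the intersection of any two cyclic flats of M is again a cyclic flat of M (so the lattice of cyclic flats of M is a sublattice of the lattice of flats of M). -/

import Mathlib

namespace Matroid

variable {α β : Type*}

/-- A circuit of a matroid: a minimal dependent set. -/
def IsCircuit' (M : Matroid α) (C : Set α) : Prop :=
  M.Dep C ∧ ∀ D, D ⊂ C → M.Indep D

/-- A cyclic flat: a flat that is a (possibly empty) union of circuits. -/
def CyclicFlat (M : Matroid α) (X : Set α) : Prop :=
  M.IsFlat X ∧ ∀ e ∈ X, ∃ C, M.IsCircuit' C ∧ C ⊆ X ∧ e ∈ C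

/-- The rank of a set: the maximum size of an independent subset. -/
noncomputable def rk (M : Matroid α) (X : Set α) : ℕ :=
  sSup {n | ∃ I, M.Indep I ∧ I ⊆ X ∧ I.ncard = n}

/-- Deletion of a set from a matroid. -/
def del (M : Matroid α) (D : Set α) : Matroid α := M ↾ (M.E \ D)

/-- Contraction of a set in a matroid. -/
def con (M : Matroid α) (C : Set α) : Matroid α := (M✶ ↾ (M.E \ C))✶

/-- `N` is a minor of `M` if it is obtained from `M` by a contraction and a deletion. -/
def IsMinorOf (N M : Matroid α) : Prop := ∃ C D, N = (M.con C).del D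

/-- Matroid isomorphism: a bijection of ground sets preserving independence. -/
def IsIsoTo (M : Matroid α) (N : Matroid β) : Prop :=
  ∃ e : M.E ≃ N.E, ∀ I : Set M.E,
    M.Indep (Subtype.val '' I) ↔ N.Indep (Subtype.val '' (e '' I))

end Matroid

/-!
Label the elements of a ground set by elements of `L`, `Nat.card L` elements for each label, and
call a set independent when, for every `z`, at most `f z` of its elements have label `≤ z`, where
`f z` counts the elements of `L` not above `z`. As `f` is submodular with `f ⊥ = 0`, the levels
`z` at which an independent set meets this bound are closed under `⊔`, and this gives the
augmentation axiom. Elements with equal labels are clones and each label class is larger than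
every value of `f`, so a cyclic flat is a union of label classes and spans the down-set of the
join of its labels; conversely each down-set `lab ⁻¹' Iic z` is a flat because `f` is strictly
increasing, and is cyclic because each label class exceeds its own rank. So the cyclic flats are
exactly the sets `lab ⁻¹' Iic z`, ordered like `L` and closed under intersection.
-/

open Set

section NotAboveCount

variable {L : Type*} [Lattice L]

noncomputable def notAboveCount (z : L) : ℕ := (Ici z)ᶜ.ncard

@[simp]
lemma notAboveCount_bot [OrderBot L] : notAboveCount (⊥ : L) = 0 := by
  simp [notAboveCount]

variable [Finite L]

lemma notAboveCount_strictMono : StrictMono (notAboveCount (L := L)) := fun _ _ h =>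
  ncard_lt_ncard (compl_lt_compl_iff_lt.2 (Ici_ssubset_Ici.2 h))

lemma notAboveCount_sup_add_inf_le (z w : L) :
    notAboveCount (z ⊔ w) + notAboveCount (z ⊓ w) ≤ notAboveCount z + notAboveCount w := by
  have hsup : (Ici (z ⊔ w))ᶜ = (Ici z)ᶜ ∪ (Ici w)ᶜ := by rw [← Ici_inter_Ici, compl_inter]
  have hinf : (Ici (z ⊓ w))ᶜ ⊆ (Ici z)ᶜ ∩ (Ici w)ᶜ := by
    rw [← compl_union]
    exact compl_subset_compl.2
      (union_subset (Ici_subset_Ici.2 inf_le_left) (Ici_subset_Ici.2 inf_le_right))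
  have hsum := ncard_union_add_ncard_inter (Ici z)ᶜ (Ici w)ᶜ
  rw [← hsup] at hsum
  have := ncard_le_ncard hinf
  unfold notAboveCount
  omega

lemma notAboveCount_lt_card (z : L) : notAboveCount z < Nat.card L := by
  rw [← ncard_univ]
  exact ncard_lt_ncard (ssubset_univ_iff.2 fun h => (h ▸ mem_univ z : z ∈ (Ici z)ᶜ) le_rfl)

end NotAboveCount

namespace Matroid

section Circuits

variable {α : Type*} {M : Matroid α} {C X : Set α}

lemma isCircuit'_iff : M.IsCircuit' C ↔ M.IsCircuit C := by
  rw [isCircuit_iff_forall_ssubset]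
  rfl

lemma cyclicFlat_iff_forall_mem_closure :
    M.CyclicFlat X ↔ M.IsFlat X ∧ ∀ e ∈ X, e ∈ M.closure (X \ {e}) := by
  refine and_congr_right fun _ => forall₂_congr fun e he => ?_
  simp only [isCircuit'_iff]
  rw [mem_closure_iff_exists_isCircuit (fun h => h.2 rfl), insert_sdiff_singleton,
    insert_eq_of_mem he]
  exact ⟨fun ⟨C, hC, hCX, heC⟩ => ⟨C, hCX, hC, heC⟩, fun ⟨C, hCX, hC, heC⟩ => ⟨C, hC, hCX, heC⟩⟩

end Circuits

section LabelIndep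

variable {L E : Type*} [Lattice L] {lab : E → L} {f : L → ℕ} {I J X : Set E}
  {e e' : E} {z w : L}

def LabelIndep (lab : E → L) (f : L → ℕ) (X : Set E) : Prop :=
  ∀ z, (X ∩ lab ⁻¹' Iic z).ncard ≤ f z

lemma labelIndep_empty : LabelIndep lab f ∅ := by
  simp [LabelIndep]

lemma LabelIndep.exists_tight_of_not_insert (hX : LabelIndep lab f X)
    (he : ¬ LabelIndep lab f (insert e X)) :
    ∃ z, lab e ≤ z ∧ (X ∩ lab ⁻¹' Iic z).ncard = f z := by
  simp only [LabelIndep, not_forall, not_le] at he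
  obtain ⟨z, hz⟩ := he
  by_cases hez : lab e ≤ z
  · rw [insert_inter_of_mem (show e ∈ lab ⁻¹' Iic z from hez)] at hz
    have := ncard_insert_le e (X ∩ lab ⁻¹' Iic z)
    exact ⟨z, hez, le_antisymm (hX z) (by omega)⟩
  · rw [insert_inter_of_notMem (show e ∉ lab ⁻¹' Iic z from hez)] at hz
    exact absurd (hX z) hz.not_ge

lemma LabelIndep.insert_of_not_le (hfm : StrictMono f) (hI : LabelIndep lab f I)
    (hIz : I ⊆ lab ⁻¹' Iic z) (he : ¬ lab e ≤ z) : LabelIndep lab f (insert e I) := by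
  intro w
  by_cases hew : lab e ≤ w
  · have hlt : z ⊓ w < w := inf_le_right.lt_of_ne fun h => he (hew.trans (h ▸ inf_le_left))
    have hIw : I ∩ lab ⁻¹' Iic w = I ∩ lab ⁻¹' Iic (z ⊓ w) := by
      rw [← Iic_inter_Iic, preimage_inter, ← inter_assoc, inter_eq_left.2 hIz]
    rw [insert_inter_of_mem (show e ∈ lab ⁻¹' Iic w from hew)]
    have := ncard_insert_le e (I ∩ lab ⁻¹' Iic w)
    have := hI (z ⊓ w)
    rw [← hIw] at this
    have := hfm hlt
    omega
  · rw [insert_inter_of_notMem (show e ∉ lab ⁻¹' Iic w from hew)]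
    exact hI w

variable [Finite E]

lemma LabelIndep.subset (hJ : LabelIndep lab f J) (hIJ : I ⊆ J) : LabelIndep lab f I :=
  fun z => (ncard_le_ncard (inter_subset_inter_left _ hIJ)).trans (hJ z)

lemma labelIndep_insert_iff_of_label_eq (he : e ∉ I) (he' : e' ∉ I) (h : lab e = lab e') :
    LabelIndep lab f (insert e I) ↔ LabelIndep lab f (insert e' I) := by
  have hcard : ∀ z, (insert e I ∩ lab ⁻¹' Iic z).ncard = (insert e' I ∩ lab ⁻¹' Iic z).ncard := by
    intro z
    by_cases hz : lab e ≤ z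
    · rw [insert_inter_of_mem (show e ∈ lab ⁻¹' Iic z from hz),
        insert_inter_of_mem (show e' ∈ lab ⁻¹' Iic z from (h ▸ hz : lab e' ≤ z)),
        ncard_insert_of_notMem fun h => he h.1, ncard_insert_of_notMem fun h => he' h.1]
    · rw [insert_inter_of_notMem (show e ∉ lab ⁻¹' Iic z from hz),
        insert_inter_of_notMem (show e' ∉ lab ⁻¹' Iic z from (h ▸ hz : ¬ lab e' ≤ z))]
  simp only [LabelIndep, hcard]

lemma LabelIndep.ncard_inter_sup_eq (hf : ∀ z w, f (z ⊔ w) + f (z ⊓ w) ≤ f z + f w)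
    (hX : LabelIndep lab f X) (hz : (X ∩ lab ⁻¹' Iic z).ncard = f z)
    (hw : (X ∩ lab ⁻¹' Iic w).ncard = f w) : (X ∩ lab ⁻¹' Iic (z ⊔ w)).ncard = f (z ⊔ w) := by
  have hinter : (X ∩ lab ⁻¹' Iic z) ∩ (X ∩ lab ⁻¹' Iic w) = X ∩ lab ⁻¹' Iic (z ⊓ w) := by
    rw [← inter_inter_distrib_left, ← preimage_inter, Iic_inter_Iic]
  have hunion : (X ∩ lab ⁻¹' Iic z) ∪ (X ∩ lab ⁻¹' Iic w) ⊆ X ∩ lab ⁻¹' Iic (z ⊔ w) :=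
    union_subset (inter_subset_inter_right _ (preimage_mono (Iic_subset_Iic.2 le_sup_left)))
      (inter_subset_inter_right _ (preimage_mono (Iic_subset_Iic.2 le_sup_right)))
  have hsum := ncard_union_add_ncard_inter (X ∩ lab ⁻¹' Iic z) (X ∩ lab ⁻¹' Iic w)
  rw [hinter, hz, hw] at hsum
  have := ncard_le_ncard hunion
  have := hX (z ⊔ w)
  have := hX (z ⊓ w)
  have := hf z w
  omega

variable [OrderBot L]

lemma LabelIndep.exists_tight_of_forall_not_insert (hf : ∀ z w, f (z ⊔ w) + f (z ⊓ w) ≤ f z + f w)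
    (hf0 : f ⊥ = 0) (hX : LabelIndep lab f X) {D : Set E}
    (hD : ∀ e ∈ D, ¬ LabelIndep lab f (insert e X)) :
    ∃ z, (∀ e ∈ D, lab e ≤ z) ∧ (X ∩ lab ⁻¹' Iic z).ncard = f z := by
  choose! t hlab htight using fun e he => hX.exists_tight_of_not_insert (hD e he)
  refine ⟨D.toFinite.toFinset.sup t, fun e he => (hlab e he).trans ?_, ?_⟩
  · exact Finset.le_sup (f := t) (D.toFinite.mem_toFinset.2 he)
  · refine Finset.sup_induction (p := fun z => (X ∩ lab ⁻¹' Iic z).ncard = f z)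
      (by have := hX ⊥; omega) (fun _ ha _ hb => hX.ncard_inter_sup_eq hf ha hb)
      fun e he => htight e (D.toFinite.mem_toFinset.1 he)

lemma LabelIndep.exists_insert_of_ncard_lt (hf : ∀ z w, f (z ⊔ w) + f (z ⊓ w) ≤ f z + f w)
    (hf0 : f ⊥ = 0) (hI : LabelIndep lab f I) (hJ : LabelIndep lab f J)
    (hlt : I.ncard < J.ncard) : ∃ e ∈ J, e ∉ I ∧ LabelIndep lab f (insert e I) := by
  by_contra! hcon
  obtain ⟨z, hJIz, hz⟩ :=
    hI.exists_tight_of_forall_not_insert hf hf0 (D := J \ I) fun e he => hcon e he.1 he.2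
  -- `J \ I` lies below the tight level `z`, so on neither side of `z` does `J` outnumber `I`
  have hdiff : J \ lab ⁻¹' Iic z ⊆ I \ lab ⁻¹' Iic z :=
    fun e he => ⟨by_contra fun heI => he.2 (hJIz e ⟨he.1, heI⟩), he.2⟩
  have := ncard_inter_add_ncard_sdiff_eq_ncard I (lab ⁻¹' Iic z)
  have := ncard_inter_add_ncard_sdiff_eq_ncard J (lab ⁻¹' Iic z)
  have := ncard_le_ncard hdiff
  have := hJ z
  omega

noncomputable def ofSubmodular (lab : E → L) (hf : ∀ z w, f (z ⊔ w) + f (z ⊓ w) ≤ f z + f w)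
    (hf0 : f ⊥ = 0) : Matroid E :=
  (IndepMatroid.ofFinite finite_univ (LabelIndep lab f) labelIndep_empty
    (fun _ _ hJ hIJ => hJ.subset hIJ)
    (fun _ _ hI hJ hlt => hI.exists_insert_of_ncard_lt hf hf0 hJ hlt)
    fun I _ => subset_univ I).matroid

end LabelIndep

section OfSubmodular

variable {L E : Type*} [Lattice L] [OrderBot L] [Finite E] {lab : E → L} {f : L → ℕ}
  {hf : ∀ z w, f (z ⊔ w) + f (z ⊓ w) ≤ f z + f w} {hf0 : f ⊥ = 0} {I X Y : Set E} {e : E} {z : L}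

@[simp]
lemma ofSubmodular_ground : (ofSubmodular lab hf hf0).E = univ := rfl

@[simp]
lemma ofSubmodular_indep_iff : (ofSubmodular lab hf hf0).Indep I ↔ LabelIndep lab f I := by
  rw [ofSubmodular, IndepMatroid.matroid_indep_iff, IndepMatroid.ofFinite_indep]

lemma ofSubmodular_mem_closure_iff (hI : LabelIndep lab f I) (heI : e ∉ I) :
    e ∈ (ofSubmodular lab hf hf0).closure I ↔ ¬ LabelIndep lab f (insert e I) := by
  rw [(ofSubmodular_indep_iff.2 hI).mem_closure_iff_of_notMem heI, ← not_indep_iff,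
    ofSubmodular_indep_iff]

lemma ofSubmodular_isFlat_preimage_Iic (hfm : StrictMono f) (z : L) :
    (ofSubmodular lab hf hf0).IsFlat (lab ⁻¹' Iic z) := by
  obtain ⟨I, hI⟩ := (ofSubmodular lab hf hf0).exists_isBasis (lab ⁻¹' Iic z)
  have hIind := ofSubmodular_indep_iff.1 hI.indep
  refine isFlat_iff_closure_eq.2 (Subset.antisymm ?_ (subset_closure _ _))
  rw [← hI.closure_eq_closure]
  intro e he
  by_contra hez
  rw [ofSubmodular_mem_closure_iff hIind fun h => hez (hI.subset h)] at he
  exact he (hIind.insert_of_not_le hfm hI.subset hez)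

lemma ofSubmodular_ncard_of_isBasis (hfm : Monotone f) (hI : (ofSubmodular lab hf hf0).IsBasis I Y)
    (hYz : Y ⊆ lab ⁻¹' Iic z) (hY : ∀ w, ¬ z ≤ w → f z ≤ (Y \ lab ⁻¹' Iic w).ncard) :
    I.ncard = f z := by
  have hIind := ofSubmodular_indep_iff.1 hI.indep
  have hle : I.ncard ≤ f z := by
    simpa [inter_eq_left.2 (hI.subset.trans hYz)] using hIind z
  by_contra hne
  obtain ⟨w, hYIw, hw⟩ := hIind.exists_tight_of_forall_not_insert hf hf0 (D := Y \ I)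
    fun e he hind => (hI.insert_dep he).not_indep (ofSubmodular_indep_iff.2 hind)
  by_cases hzw : z ≤ w
  · rw [inter_eq_left.2 (hI.subset.trans (hYz.trans (preimage_mono (Iic_subset_Iic.2 hzw))))] at hw
    have := hfm hzw
    omega
  · have hsub : Y \ lab ⁻¹' Iic w ⊆ I :=
      fun e he => by_contra fun heI => he.2 (hYIw e ⟨he.1, heI⟩)
    have := ncard_le_ncard hsub
    have := hY w hzw
    omega

lemma ofSubmodular_preimage_Iic_subset_closure (hI : LabelIndep lab f I)
    (hIz : I ⊆ lab ⁻¹' Iic z) (hcard : I.ncard = f z) :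
    lab ⁻¹' Iic z ⊆ (ofSubmodular lab hf hf0).closure I := by
  intro e he
  by_cases heI : e ∈ I
  · exact subset_closure _ _ (subset_univ _) heI
  rw [ofSubmodular_mem_closure_iff hI heI]
  intro hins
  have := hins z
  rw [inter_eq_left.2 (insert_subset he hIz), ncard_insert_of_notMem heI] at this
  omega

/-- Elements with the same label are clones (`labelIndep_insert_iff_of_label_eq`). -/
lemma ofSubmodular_preimage_label_subset_of_cyclicFlat (hX : (ofSubmodular lab hf hf0).CyclicFlat X)
    (he : e ∈ X) : lab ⁻¹' {lab e} ⊆ X := by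
  rw [cyclicFlat_iff_forall_mem_closure] at hX
  intro e' he'
  by_contra he'X
  obtain ⟨I, hI⟩ := (ofSubmodular lab hf hf0).exists_isBasis (X \ {e})
  have hIind := ofSubmodular_indep_iff.1 hI.indep
  have heI : e ∉ I := fun h => (hI.subset h).2 rfl
  have he'I : e' ∉ I := fun h => he'X (hI.subset h).1
  have hecl := hX.2 e he
  rw [← hI.closure_eq_closure, ofSubmodular_mem_closure_iff hIind heI,
    labelIndep_insert_iff_of_label_eq heI he'I he'.symm,
    ← ofSubmodular_mem_closure_iff (hf := hf) (hf0 := hf0) hIind he'I] at hecl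
  exact he'X (hX.1.closure ▸ closure_subset_closure _ (hI.subset.trans sdiff_subset) hecl)

lemma ofSubmodular_cyclicFlat_preimage_Iic (hfm : StrictMono f)
    (hfib : ∀ w z, f z < (lab ⁻¹' {w}).ncard) (z : L) :
    (ofSubmodular lab hf hf0).CyclicFlat (lab ⁻¹' Iic z) := by
  refine cyclicFlat_iff_forall_mem_closure.2
    ⟨ofSubmodular_isFlat_preimage_Iic hfm z, fun e he => ?_⟩
  have hYe : lab ⁻¹' {lab e} \ {e} ⊆ lab ⁻¹' Iic (lab e) := fun x hx => le_of_eq hx.1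
  have hYcard : f (lab e) ≤ (lab ⁻¹' {lab e} \ {e}).ncard := by
    rw [ncard_sdiff_singleton_of_mem (show e ∈ lab ⁻¹' {lab e} from rfl)]
    have := hfib (lab e) (lab e)
    omega
  obtain ⟨I, hI⟩ := (ofSubmodular lab hf hf0).exists_isBasis (lab ⁻¹' {lab e} \ {e})
  have hIcard := ofSubmodular_ncard_of_isBasis hfm.monotone hI hYe fun w hw =>
    hYcard.trans (ncard_le_ncard fun x hx => ⟨hx, fun hxw => hw (hx.1 ▸ hxw : lab e ≤ w)⟩)
  have hIsub : I ⊆ lab ⁻¹' Iic z \ {e} :=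
    hI.subset.trans fun x hx => ⟨(le_of_eq hx.1).trans he, hx.2⟩
  exact closure_subset_closure _ hIsub <| ofSubmodular_preimage_Iic_subset_closure
    (ofSubmodular_indep_iff.1 hI.indep) (hI.subset.trans hYe) hIcard (le_refl (lab e))

/-- The join `z` of the labels of `X` works: `X` contains whole label classes, which are large
enough to give `X` rank `f z`. -/
lemma ofSubmodular_eq_preimage_Iic_of_cyclicFlat (hfm : Monotone f)
    (hfib : ∀ w z, f z < (lab ⁻¹' {w}).ncard)
    (hX : (ofSubmodular lab hf hf0).CyclicFlat X) : ∃ z, X = lab ⁻¹' Iic z := by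
  set z := X.toFinite.toFinset.sup lab
  have hXz : X ⊆ lab ⁻¹' Iic z :=
    fun e he => Finset.le_sup (f := lab) (X.toFinite.mem_toFinset.2 he)
  obtain ⟨I, hI⟩ := (ofSubmodular lab hf hf0).exists_isBasis X
  have hIcard : I.ncard = f z := ofSubmodular_ncard_of_isBasis hfm hI hXz fun w hw => by
    obtain ⟨e, heX, hew⟩ : ∃ e ∈ X, ¬ lab e ≤ w := by
      by_contra! h
      exact hw (Finset.sup_le fun e he => h e (X.toFinite.mem_toFinset.1 he))
    have hfibX : lab ⁻¹' {lab e} ⊆ X \ lab ⁻¹' Iic w := fun x hx =>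
      ⟨ofSubmodular_preimage_label_subset_of_cyclicFlat hX heX hx,
        fun hxw => hew (hx ▸ hxw : lab e ≤ w)⟩
    exact (hfib (lab e) z).le.trans (ncard_le_ncard hfibX)
  refine ⟨z, hXz.antisymm ?_⟩
  calc lab ⁻¹' Iic z ⊆ (ofSubmodular lab hf hf0).closure I :=
        ofSubmodular_preimage_Iic_subset_closure (ofSubmodular_indep_iff.1 hI.indep)
          (hI.subset.trans hXz) hIcard
    _ = X := by rw [hI.closure_eq_closure, hX.1.closure]

lemma ofSubmodular_cyclicFlat_iff (hfm : StrictMono f) (hfib : ∀ w z, f z < (lab ⁻¹' {w}).ncard) :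
    (ofSubmodular lab hf hf0).CyclicFlat X ↔ ∃ z, X = lab ⁻¹' Iic z := by
  refine ⟨ofSubmodular_eq_preimage_Iic_of_cyclicFlat hfm.monotone hfib, ?_⟩
  rintro ⟨z, rfl⟩
  exact ofSubmodular_cyclicFlat_preimage_Iic hfm hfib z

lemma ofSubmodular_cyclicFlat_inter (hfm : StrictMono f)
    (hfib : ∀ w z, f z < (lab ⁻¹' {w}).ncard) (hX : (ofSubmodular lab hf hf0).CyclicFlat X)
    (hY : (ofSubmodular lab hf hf0).CyclicFlat Y) :
    (ofSubmodular lab hf hf0).CyclicFlat (X ∩ Y) := by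
  obtain ⟨z, rfl⟩ := (ofSubmodular_cyclicFlat_iff hfm hfib).1 hX
  obtain ⟨w, rfl⟩ := (ofSubmodular_cyclicFlat_iff hfm hfib).1 hY
  rw [← preimage_inter, Iic_inter_Iic]
  exact ofSubmodular_cyclicFlat_preimage_Iic hfm hfib _

noncomputable def ofSubmodularCyclicFlatOrderIso (hfm : StrictMono f)
    (hfib : ∀ w z, f z < (lab ⁻¹' {w}).ncard) :
    L ≃o {X : Set E // (ofSubmodular lab hf hf0).CyclicFlat X} :=
  have hsurj : Function.Surjective lab := fun w =>
    nonempty_of_ncard_ne_zero (Nat.zero_lt_of_lt (hfib w ⊥)).ne'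
  OrderIso.ofSurjective
    (OrderEmbedding.ofMapLEIff
      (fun z => ⟨lab ⁻¹' Iic z, ofSubmodular_cyclicFlat_preimage_Iic hfm hfib z⟩)
      fun _ _ => hsurj.preimage_subset_preimage_iff.trans Iic_subset_Iic)
    fun X => by
      obtain ⟨z, hz⟩ := (ofSubmodular_cyclicFlat_iff hfm hfib).1 X.2
      exact ⟨z, Subtype.ext hz.symm⟩

end OfSubmodular

end Matroid

lemma exists_label_ncard_preimage_singleton (L : Type*) [Finite L] :
    ∃ lab : Fin (Nat.card L) × Fin (Nat.card L) → L, ∀ w, (lab ⁻¹' {w}).ncard = Nat.card L := by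
  refine ⟨(Finite.equivFin L).symm ∘ Prod.fst, fun w => ?_⟩
  simp [preimage_comp, ← Equiv.image_eq_preimage_symm, ← prod_univ, ncard_prod]

/-- Every finite lattice is order-isomorphic to the lattice of cyclic flats of a finite
matroid in which, moreover, the intersection of any two cyclic flats is again a cyclic flat
(so the lattice of cyclic flats is a sublattice of the lattice of flats). -/
theorem exists_matroid_cyclicFlats_orderIso_inter_closed
    (L : Type*) [Lattice L] [Fintype L] [Nonempty L] :
    ∃ (α : Type) (M : Matroid α), M.Finite ∧
      Nonempty (L ≃o {X : Set α // M.CyclicFlat X}) ∧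
      ∀ X Y : Set α, M.CyclicFlat X → M.CyclicFlat Y → M.CyclicFlat (X ∩ Y) := by
  let _ : OrderBot L := Fintype.toOrderBot L
  obtain ⟨lab, hlab⟩ := exists_label_ncard_preimage_singleton L
  have hfib : ∀ w z, notAboveCount z < (lab ⁻¹' {w}).ncard :=
    fun w z => hlab w ▸ notAboveCount_lt_card z
  exact ⟨_, Matroid.ofSubmodular lab notAboveCount_sup_add_inf_le notAboveCount_bot,
    inferInstance, ⟨Matroid.ofSubmodularCyclicFlatOrderIso notAboveCount_strictMono hfib⟩,
    fun _ _ => Matroid.ofSubmodular_cyclicFlat_inter notAboveCount_strictMono hfib⟩
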